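/- If π ∈ S̃_n and i ∈ [n] is a descent of π (i.e. π(i) > π(i+1)), then the code of π s_i is obtained from the code c(π) = (c_1, ..., c_n) by replacing the entries in positions i and i+1 (indices mod n) by c_{i+1} and c_i − 1 respectively. -/

import Mathlib

open scoped TensorProduct

/-- Membership in the affine symmetric group `S̃_n`, viewed inside `Equiv.Perm ℤ`. -/
def IsAffine (n : ℕ) (π : Equiv.Perm ℤ) : Prop :=
  (∀ i : ℤ, π (i + n) = π i + n) ∧
  (∑ i ∈ Finset.Icc (1 : ℤ) (n : ℤ), π i) = ∑ i ∈ Finset.Icc (1 : ℤ) (n : ℤ), i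

/-- The underlying function of the affine reflection `t_{ij}`. -/
def affTFun (n : ℕ) (i j k : ℤ) : ℤ :=
  if (k - i) % (n : ℤ) = 0 then k - i + j
  else if (k - j) % (n : ℤ) = 0 then k - j + i
  else k

theorem affTFun_involutive {n : ℕ} {i j : ℤ} (h : ¬ (j - i) % (n : ℤ) = 0) :
    Function.Involutive (affTFun n i j) := by
  have key : ∀ a : ℤ, a % (n : ℤ) = 0 ↔ (n : ℤ) ∣ a :=
    fun a => (@Int.dvd_iff_emod_eq_zero (n : ℤ) a).symm
  rw [key] at h
  intro k
  by_cases h1 : (n : ℤ) ∣ (k - i)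
  · have h2 : ¬ (n : ℤ) ∣ (k - i + j - i) := by
      intro hd
      apply h
      have h5 : j - i = (k - i + j - i) - (k - i) := by ring
      rw [h5]
      exact dvd_sub hd h1
    have h3 : (n : ℤ) ∣ (k - i + j - j) := by
      have h5 : k - i + j - j = k - i := by ring
      rw [h5]; exact h1
    have e1 : affTFun n i j k = k - i + j := by simp [affTFun, key, h1]
    have e2 : affTFun n i j (k - i + j) = k := by
      simp only [affTFun, key]
      rw [if_neg h2, if_pos h3]
      ring
    rw [e1, e2]
  · by_cases h2 : (n : ℤ) ∣ (k - j)
    · have h3 : (n : ℤ) ∣ (k - j + i - i) := by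
        have h5 : k - j + i - i = k - j := by ring
        rw [h5]; exact h2
      have e1 : affTFun n i j k = k - j + i := by simp [affTFun, key, h1, h2]
      have e2 : affTFun n i j (k - j + i) = k := by
        simp only [affTFun, key]
        rw [if_pos h3]
        ring
      rw [e1, e2]
    · have e1 : affTFun n i j k = k := by simp [affTFun, key, h1, h2]
      rw [e1, e1]

/-- The affine reflection `t_{ij}` (interpreted as the identity when `i ≡ j (mod n)`). -/
noncomputable def affT (n : ℕ) (i j : ℤ) : Equiv.Perm ℤ :=
  if h : (j - i) % (n : ℤ) = 0 then 1
  else Function.Involutive.toPerm _ (affTFun_involutive h)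

/-- The simple reflection `s_i = t_{i,i+1}` of `S̃_n`. -/
noncomputable def affS (n : ℕ) (i : ℤ) : Equiv.Perm ℤ := affT n i (i + 1)

/-- Coxeter length: minimal length of a word in the simple reflections `s_1, …, s_n`. -/
noncomputable def wordLength (n : ℕ) (π : Equiv.Perm ℤ) : ℕ :=
  sInf {l : ℕ | ∃ w : List ℤ,
    (∀ x ∈ w, 1 ≤ x ∧ x ≤ (n : ℤ)) ∧ (w.map (affS n)).prod = π ∧ w.length = l}

/-- The set of inversions of `π`, up to the diagonal translation relation. -/
def InvPair (π : Equiv.Perm ℤ) : Type :=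
  {p : ℤ × ℤ // p.1 < p.2 ∧ π p.2 < π p.1}

/-- The number of equivalence classes of inversions of `π` under
`(a,b) ~ (a + mn, b + mn)`. -/
noncomputable def invLength (n : ℕ) (π : Equiv.Perm ℤ) : ℕ :=
  Nat.card (Quot fun p q : InvPair π =>
    ∃ m : ℤ, q.1.1 = p.1.1 + m * n ∧ q.1.2 = p.1.2 + m * n)

/-- Entry `c_i` of the code of an affine permutation. -/
noncomputable def codeEntry (π : Equiv.Perm ℤ) (i : ℤ) : ℕ :=
  Nat.card {j : ℤ // i < j ∧ π j < π i}

/-- Entry `ĉ_i` of the involution code of an affine involution. -/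
noncomputable def icodeEntry (z : Equiv.Perm ℤ) (i : ℤ) : ℕ :=
  Nat.card {j : ℤ // i < j ∧ z j < z i ∧ z j ≤ i}

/-- `ℓ'(z)`: `n` minus the number of orbits of `z` acting on `ℤ/nℤ`. -/
noncomputable def lprime (n : ℕ) (z : Equiv.Perm ℤ) : ℕ :=
  n - Nat.card (Quot fun a b : ZMod n => ((z (a.val : ℤ) : ℤ) : ZMod n) = b)

/-- The characterizing properties of the Demazure (0-Hecke) product on `S̃_n`:
closure, associativity, `s_i ∘ s_i = s_i`, and agreement with the group product
on length-additive factorizations. -/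
def IsDemazure (n : ℕ) (D : Equiv.Perm ℤ → Equiv.Perm ℤ → Equiv.Perm ℤ) : Prop :=
  (∀ a b, IsAffine n a → IsAffine n b → IsAffine n (D a b)) ∧
  (∀ a b c, IsAffine n a → IsAffine n b → IsAffine n c →
    D (D a b) c = D a (D b c)) ∧
  (∀ i : ℤ, D (affS n i) (affS n i) = affS n i) ∧
  (∀ a b, IsAffine n a → IsAffine n b →
    wordLength n (a * b) = wordLength n a + wordLength n b → D a b = a * b)

/-- The set of Hecke atoms `{π : π⁻¹ ∘ π = z}`. -/
def AHecke (n : ℕ) (D : Equiv.Perm ℤ → Equiv.Perm ℤ → Equiv.Perm ℤ)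
    (z : Equiv.Perm ℤ) : Set (Equiv.Perm ℤ) :=
  {π | IsAffine n π ∧ D π⁻¹ π = z}

/-- The set of atoms: minimal-length Hecke atoms. -/
def DemAtoms (n : ℕ) (D : Equiv.Perm ℤ → Equiv.Perm ℤ → Equiv.Perm ℤ)
    (z : Equiv.Perm ℤ) : Set (Equiv.Perm ℤ) :=
  {π | π ∈ AHecke n D z ∧ ∀ σ ∈ AHecke n D z, wordLength n π ≤ wordLength n σ}

/-- The Bruhat covering relation on `S̃_n`. -/
def BruhatCov (n : ℕ) (a b : Equiv.Perm ℤ) : Prop :=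
  (∃ i j : ℤ, i < j ∧ (j - i) % (n : ℤ) ≠ 0 ∧ b = a * affT n i j) ∧
  wordLength n b = wordLength n a + 1

/-- The Bruhat order on `S̃_n`. -/
def BruhatLE (n : ℕ) : Equiv.Perm ℤ → Equiv.Perm ℤ → Prop :=
  Relation.ReflTransGen (BruhatCov n)

/-- The covering relation of the Bruhat order restricted to involutions in `S̃_n`. -/
def BruhatCovI (n : ℕ) (y z : Equiv.Perm ℤ) : Prop :=
  IsAffine n y ∧ IsAffine n z ∧ y⁻¹ = y ∧ z⁻¹ = z ∧
  BruhatLE n y z ∧ y ≠ z ∧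
  ∀ w : Equiv.Perm ℤ, IsAffine n w → w⁻¹ = w →
    BruhatLE n y w → BruhatLE n w z → w = y ∨ w = z

/-- Strict dominance order on partitions (written as weakly decreasing functions). -/
def DomLT (p q : ℕ → ℕ) : Prop :=
  p ≠ q ∧ ∀ k : ℕ, ∑ i ∈ Finset.range k, p i ≤ ∑ i ∈ Finset.range k, q i

/-- The shape `λ(π)`: the transpose of the partition sorting the code of `π⁻¹`,
recorded as the weakly decreasing function `k ↦ λ(π)_{k+1}`. -/
noncomputable def affShape (n : ℕ) (π : Equiv.Perm ℤ) : ℕ → ℕ :=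
  fun k => Multiset.countP (fun x => k < x)
    ((Finset.Icc (1 : ℤ) (n : ℤ)).val.map (codeEntry π⁻¹))

/-- The shape `μ(z)`: the transpose of the partition sorting the involution code of `z`,
recorded as the weakly decreasing function `k ↦ μ(z)_{k+1}`. -/
noncomputable def invShape (n : ℕ) (z : Equiv.Perm ℤ) : ℕ → ℕ :=
  fun k => Multiset.countP (fun x => k < x)
    ((Finset.Icc (1 : ℤ) (n : ℤ)).val.map (icodeEntry z))

/-- The weakly decreasing rearrangement of a multiset of naturals, padded by zeros. -/
noncomputable def rearr (s : Multiset ℕ) : ℕ → ℕ :=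
  fun k => ((s.sort (· ≤ ·)).reverse).getD k 0

/-- Remove the entries of a list of integers that repeat an earlier residue mod `n`. -/
def dedupMod (n : ℕ) : List ℤ → List ℤ
  | [] => []
  | x :: xs => x :: dedupMod n (xs.filter fun y => (y - x) % (n : ℤ) ≠ 0)
termination_by l => l.length
decreasing_by
  simp only [List.length_cons, List.length_unattach]
  exact Nat.lt_succ_of_le ((List.length_filter_le _ _).trans_eq (by simp))

/-- The window `[[z(a₁), a₁, z(a₂), a₂, …]]` of `α_min(z)⁻¹`, where `a₁ < a₂ < ⋯`
are the elements `a ∈ [n]` with `a ≤ z(a)`. -/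
noncomputable def aminWindow (n : ℕ) (z : Equiv.Perm ℤ) : List ℤ :=
  dedupMod n
    ((((Finset.Icc (1 : ℤ) (n : ℤ)).sort (· ≤ ·)).filter fun a => a ≤ z a).flatMap
      fun a => [z a, a])

/-- Cyclically decreasing elements of `S̃_n`. -/
def IsCycDec (n : ℕ) (π : Equiv.Perm ℤ) : Prop :=
  ∃ w : List ℤ,
    (∀ x ∈ w, 1 ≤ x ∧ x ≤ (n : ℤ)) ∧ (w.map (affS n)).prod = π ∧
    w.length = wordLength n π ∧
    w.Pairwise fun a b => (a + 1 - b) % (n : ℤ) ≠ 0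

/-- The coefficient of the monomial `∏ₖ xₖ₊₁^(α k)` in Lam's affine Stanley symmetric
function `F_π`: the number of length-additive factorizations of `π` into cyclically
decreasing factors of lengths prescribed by `α`. -/
noncomputable def stanleyCoeff (n : ℕ) (π : Equiv.Perm ℤ) (α : ℕ →₀ ℕ) : ℕ :=
  Nat.card {f : ℕ → Equiv.Perm ℤ //
    (∀ k, IsCycDec n (f k)) ∧ (∀ k, wordLength n (f k) = α k) ∧
    (∑ k ∈ α.support, α k) = wordLength n π ∧
    ∃ N : ℕ, (∀ k, N ≤ k → f k = 1) ∧ ((List.range N).map f).prod = π}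

/-- The set `Φ⁻_r(y)` of Bruhat covers of `y` of the form `τⁿ_{i r}(y)` with `i < r`
and `i ∉ {r, y(r)} + nℤ`. -/
def PhiMinus (n : ℕ) (τ : ℤ → ℤ → Equiv.Perm ℤ → Equiv.Perm ℤ)
    (y : Equiv.Perm ℤ) (r : ℤ) : Set (Equiv.Perm ℤ) :=
  {z | BruhatCovI n y z ∧ ∃ i : ℤ, i < r ∧ (i - r) % (n : ℤ) ≠ 0 ∧
    (i - y r) % (n : ℤ) ≠ 0 ∧ z = τ i r y}

/-- The set `Φ⁺_r(y)` of Bruhat covers of `y` of the form `τⁿ_{r j}(y)` with `r < j`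
and `j ∉ {r, y(r)} + nℤ`. -/
def PhiPlus (n : ℕ) (τ : ℤ → ℤ → Equiv.Perm ℤ → Equiv.Perm ℤ)
    (y : Equiv.Perm ℤ) (r : ℤ) : Set (Equiv.Perm ℤ) :=
  {z | BruhatCovI n y z ∧ ∃ j : ℤ, r < j ∧ (j - r) % (n : ℤ) ≠ 0 ∧
    (j - y r) % (n : ℤ) ≠ 0 ∧ z = τ r j y}

/-- The affine symmetric group as a subtype of `Equiv.Perm ℤ`. -/
abbrev AffPerm (n : ℕ) := {π : Equiv.Perm ℤ // IsAffine n π}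

/-- The coproduct `Δ(π) = Σ_{π ≐ π'π''} π' ⊗ π''` on `ℚ S̃_n`. -/
noncomputable def affComul (n : ℕ) :
    (AffPerm n →₀ ℚ) →ₗ[ℚ] TensorProduct ℚ (AffPerm n →₀ ℚ) (AffPerm n →₀ ℚ) :=
  Finsupp.lift _ ℚ _ fun π : AffPerm n =>
    ∑ᶠ p ∈ {p : AffPerm n × AffPerm n |
        p.1.val * p.2.val = π.val ∧
        wordLength n π.val = wordLength n p.1.val + wordLength n p.2.val},
      (Finsupp.single p.1 (1 : ℚ)) ⊗ₜ[ℚ] (Finsupp.single p.2 (1 : ℚ))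

/-!
Right multiplication by `s_i` relabels positions: `c_k(π s_i)` counts the `j > k` with
`π (s_i j) < π (s_i k)`, while `c_{s_i k}(π)`, reindexed by `s_i`, counts the same `j` under
`s_i j > s_i k` instead. Since `s_i` moves every integer by at most one, the two conditions
disagree only on a pair `{a, a + 1}` with `a ≡ i (mod n)` that `s_i` swaps. For `k ≢ i, i + 1`
no such pair involves `k`; for `k = i` the descent excludes the pair; for `k = i + 1` it
contributes exactly the one inversion `(i, i + 1)` of `π`.
-/

open Equiv

lemma Int.not_modEq_of_ne_of_abs_sub_lt {n a b : ℤ} (hne : a ≠ b) (h : |b - a| < n) :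
    ¬ a ≡ b [ZMOD n] := fun hab =>
  hne (sub_eq_zero.mp (Int.eq_zero_of_abs_lt_dvd (Int.modEq_iff_dvd.mp hab) h)).symm

lemma Int.not_modEq_add_one {n : ℕ} (hn : n ≠ 1) (i : ℤ) : ¬ i ≡ i + 1 [ZMOD n] := by
  rw [Int.modEq_iff_dvd, add_sub_cancel_left, Int.natCast_dvd_ofNat]
  exact fun h => hn (Nat.dvd_one.mp h)

lemma Nat.card_subtype_eq_card_sub_one {α : Type*} {p q : α → Prop} {a : α} (ha : q a)
    (hpq : ∀ x, p x ↔ q x ∧ x ≠ a) : Nat.card {x // p x} = Nat.card {x // q x} - 1 := by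
  have hp : Nat.card {x // p x} = ({x | q x} \ {a} : Set α).ncard :=
    Nat.card_congr (Equiv.subtypeEquivRight fun x => by simp [hpq])
  rw [hp, Set.ncard_sdiff_singleton_of_mem (s := {x | q x}) ha]
  rfl

section Code

variable (π σ : Perm ℤ)

lemma codeEntry_add_of_periodic {m : ℤ} (hπ : ∀ x, π (x + m) = π x + m) (k : ℤ) :
    codeEntry π (k + m) = codeEntry π k :=
  Nat.card_congr (Equiv.subtypeEquiv (Equiv.subRight m) fun j => by
    simp only [Equiv.subRight_apply]
    have hj := hπ (j - m)
    rw [sub_add_cancel] at hj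
    rw [hj, hπ k]
    omega)

lemma codeEntry_apply_eq_card (k : ℤ) :
    codeEntry π (σ k) = Nat.card {j // σ k < σ j ∧ π (σ j) < π (σ k)} :=
  (Nat.card_congr (Equiv.subtypeEquiv σ fun _ => Iff.rfl)).symm

lemma lt_iff_apply_lt_or_swap (hσ : ∀ x, |σ x - x| ≤ 1) (j k : ℤ) :
    (j < k ↔ σ j < σ k) ∨ (σ j = k ∧ σ k = j) := by
  have hinj : σ j = σ k ↔ j = k := σ.injective.eq_iff
  have := abs_sub_le_iff.mp (hσ j)
  have := abs_sub_le_iff.mp (hσ k)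
  omega

variable {σ} (hσ : ∀ x, |σ x - x| ≤ 1)
include hσ

lemma codeEntry_mul_of_apply_eq_self {k : ℤ} (hk : σ k = k) :
    codeEntry (π * σ) k = codeEntry π k := by
  conv_rhs => rw [← hk, codeEntry_apply_eq_card]
  refine Nat.card_congr (Equiv.subtypeEquivRight fun j => and_congr_left fun _ => ?_)
  rcases lt_iff_apply_lt_or_swap σ hσ k j with h | ⟨h1, -⟩
  · exact h
  · rw [hk] at h1 ⊢
    subst h1
    simp only [hk, lt_irrefl]

lemma codeEntry_mul_of_apply_eq_add_one {a : ℤ} (ha : σ a = a + 1) (hdes : π (a + 1) < π a) :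
    codeEntry (π * σ) a = codeEntry π (a + 1) := by
  conv_rhs => rw [← ha, codeEntry_apply_eq_card]
  refine Nat.card_congr (Equiv.subtypeEquivRight fun j => ?_)
  show a < j ∧ π (σ j) < π (σ a) ↔ σ a < σ j ∧ π (σ j) < π (σ a)
  rcases lt_iff_apply_lt_or_swap σ hσ a j with h | ⟨-, h⟩
  · exact and_congr_left fun _ => h
  · have : ¬ π (σ j) < π (σ a) := by
      rw [h, ha]
      exact hdes.asymm
    simp only [this, and_false]

lemma codeEntry_mul_add_one_of_apply_eq {a : ℤ} (ha : σ a = a + 1) (ha' : σ (a + 1) = a)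
    (hdes : π (a + 1) < π a) : codeEntry (π * σ) (a + 1) = codeEntry π a - 1 := by
  conv_rhs => rw [← ha', codeEntry_apply_eq_card]
  refine Nat.card_subtype_eq_card_sub_one (a := a) ?_ fun j => ?_
  · show σ (a + 1) < σ a ∧ π (σ a) < π (σ (a + 1))
    rw [ha, ha']
    exact ⟨by omega, hdes⟩
  · show a + 1 < j ∧ π (σ j) < π (σ (a + 1)) ↔
      (σ (a + 1) < σ j ∧ π (σ j) < π (σ (a + 1))) ∧ j ≠ a
    rcases lt_iff_apply_lt_or_swap σ hσ (a + 1) j with h | ⟨h, -⟩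
    · have hja : j ≠ a := by
        rintro rfl
        rw [ha, ha'] at h
        omega
      rw [h]
      tauto
    · rw [ha'] at h
      subst h
      simp

end Code

section SimpleReflection

variable {n : ℕ} (hn : n ≠ 1) {i : ℤ}
include hn

lemma affS_apply (x : ℤ) : affS n i x = affTFun n i (i + 1) x := by
  have h : ¬ (i + 1 - i) % (n : ℤ) = 0 :=
    mt Int.emod_eq_emod_iff_emod_sub_eq_zero.mpr fun h => Int.not_modEq_add_one hn i h.symm
  rw [affS, affT, dif_neg h]
  rfl

lemma affS_apply_of_modEq {x : ℤ} (h : x ≡ i [ZMOD n]) : affS n i x = x + 1 := by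
  rw [affS_apply hn, affTFun, if_pos (Int.emod_eq_emod_iff_emod_sub_eq_zero.mp h)]
  ring

lemma affS_apply_of_modEq_add_one {x : ℤ} (h : x ≡ i + 1 [ZMOD n]) : affS n i x = x - 1 := by
  have hx : ¬ x ≡ i [ZMOD n] := fun hx => Int.not_modEq_add_one hn i (hx.symm.trans h)
  rw [affS_apply hn, affTFun, if_neg (mt Int.emod_eq_emod_iff_emod_sub_eq_zero.mpr hx),
    if_pos (Int.emod_eq_emod_iff_emod_sub_eq_zero.mp h)]
  ring

lemma affS_apply_of_not_modEq {x : ℤ} (h : ¬ x ≡ i [ZMOD n]) (h' : ¬ x ≡ i + 1 [ZMOD n]) :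
    affS n i x = x := by
  rw [affS_apply hn, affTFun, if_neg (mt Int.emod_eq_emod_iff_emod_sub_eq_zero.mpr h),
    if_neg (mt Int.emod_eq_emod_iff_emod_sub_eq_zero.mpr h')]

lemma abs_affS_apply_sub_le (x : ℤ) : |affS n i x - x| ≤ 1 := by
  by_cases h : x ≡ i [ZMOD n]
  · simp [affS_apply_of_modEq hn h]
  by_cases h' : x ≡ i + 1 [ZMOD n]
  · simp [affS_apply_of_modEq_add_one hn h']
  · simp [affS_apply_of_not_modEq hn h h']

lemma affS_apply_add (x : ℤ) : affS n i (x + n) = affS n i x + n := by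
  have hx : x + n ≡ x [ZMOD n] := Int.add_modEq_right
  by_cases h : x ≡ i [ZMOD n]
  · rw [affS_apply_of_modEq hn h, affS_apply_of_modEq hn (hx.trans h)]
    ring
  by_cases h' : x ≡ i + 1 [ZMOD n]
  · rw [affS_apply_of_modEq_add_one hn h', affS_apply_of_modEq_add_one hn (hx.trans h')]
    ring
  · rw [affS_apply_of_not_modEq hn h h',
      affS_apply_of_not_modEq hn (fun h₁ => h (hx.symm.trans h₁)) fun h₁ => h' (hx.symm.trans h₁)]

end SimpleReflection

theorem code_of_mul_descent_general (n : ℕ)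
    (π : Equiv.Perm ℤ) (hπ : IsAffine n π)
    (i : ℤ) (hi1 : 1 ≤ i) (hi2 : i ≤ n) (hdes : π (i + 1) < π i) :
    codeEntry (π * affS n i) i = codeEntry π (if i = (n : ℤ) then 1 else i + 1) ∧
    codeEntry (π * affS n i) (if i = (n : ℤ) then 1 else i + 1) = codeEntry π i - 1 ∧
    ∀ k : ℤ, 1 ≤ k → k ≤ n → k ≠ i → k ≠ (if i = (n : ℤ) then 1 else i + 1) →
      codeEntry (π * affS n i) k = codeEntry π k := by
  have hper : ∀ x, π (x + n) = π x + n := hπ.1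
  have hn : n ≠ 1 := by
    rintro rfl
    have := hper i
    push_cast at this
    omega
  have hσ := abs_affS_apply_sub_le hn (i := i)
  have hσi : affS n i i = i + 1 := affS_apply_of_modEq hn .rfl
  have hσi' : affS n i (i + 1) = i := by
    rw [affS_apply_of_modEq_add_one hn .rfl, add_sub_cancel_right]
  have hσper : ∀ x, (π * affS n i) (x + n) = (π * affS n i) x + n := fun x => by
    simp only [Perm.mul_apply, affS_apply_add hn, hper]
  have hwrap : ∀ τ : Perm ℤ, (∀ x, τ (x + n) = τ x + n) →
      codeEntry τ (if i = (n : ℤ) then 1 else i + 1) = codeEntry τ (i + 1) := by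
    intro τ hτ
    split_ifs with h
    · rw [h, add_comm, codeEntry_add_of_periodic τ hτ]
    · rfl
  refine ⟨?_, ?_, fun k hk1 hk2 hki hki' => ?_⟩
  · rw [hwrap π hper, codeEntry_mul_of_apply_eq_add_one π hσ hσi hdes]
  · rw [hwrap _ hσper, codeEntry_mul_add_one_of_apply_eq π hσ hσi hσi' hdes]
  · refine codeEntry_mul_of_apply_eq_self π hσ (affS_apply_of_not_modEq hn ?_ ?_)
    · exact Int.not_modEq_of_ne_of_abs_sub_lt hki (by rw [abs_lt]; omega)
    · split_ifs at hki' <;>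
        exact Int.not_modEq_of_ne_of_abs_sub_lt (by omega) (by rw [abs_lt]; omega)

/-- if `i ∈ [n]` is a descent of `π`, then the code of `π s_i` is obtained
from the code of `π` by replacing the entries in positions `i` and `i+1` (mod `n`)
by `c_{i+1}` and `c_i - 1`. -/
theorem code_of_mul_descent (n : ℕ) (hn : 0 < n)
    (π : Equiv.Perm ℤ) (hπ : IsAffine n π)
    (i : ℤ) (hi1 : 1 ≤ i) (hi2 : i ≤ n) (hdes : π (i + 1) < π i) :
    codeEntry (π * affS n i) i = codeEntry π (if i = (n : ℤ) then 1 else i + 1) ∧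
    codeEntry (π * affS n i) (if i = (n : ℤ) then 1 else i + 1) = codeEntry π i - 1 ∧
    ∀ k : ℤ, 1 ≤ k → k ≤ n → k ≠ i → k ≠ (if i = (n : ℤ) then 1 else i + 1) →
      codeEntry (π * affS n i) k = codeEntry π k :=
  code_of_mul_descent_general n π hπ i hi1 hi2 hdes
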